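/- Let −∞ < κ₁ < κ₂ < +∞. There exists a constant M > 0, depending only on κ₁ and κ₂, such that for every C¹ regular curve γ parametrized by arc length on [0, L_γ] satisfying κ₁ < inf_s κ⁻_γ(s) ≤ sup_s κ⁺_γ(s) < κ₂, one has |𝐭_γ(s₂) − 𝐭_γ(s₁)| ≤ M|s₂ − s₁| for all s₁, s₂ ∈ [0, L_γ]; i.e., the unit tangent vector of γ is Lipschitz continuous with a uniform constant. -/

import Mathlib

open MeasureTheory Real Set Filter Topology NNReal RealInnerProductSpace

noncomputable section

namespace Curves

/-- `ℝ³` with the Euclidean inner product. -/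
abbrev E3 : Type := EuclideanSpace ℝ (Fin 3)

/-- The cross product on `ℝ³`. -/
def cross (x y : E3) : E3 :=
  (EuclideanSpace.equiv (Fin 3) ℝ).symm
    ![x 1 * y 2 - x 2 * y 1, x 2 * y 0 - x 0 * y 2, x 0 * y 1 - x 1 * y 0]

/-- The intrinsic (angular) distance on the unit sphere `𝕊² ⊆ ℝ³`. -/
def sdist (x y : E3) : ℝ := Real.arccos (inner ℝ x y)

/-- `arccot : ℝ → (0, π)`. -/
def arccot (x : ℝ) : ℝ := π / 2 - Real.arctan x

/-- A `C¹` regular curve with values in the unit sphere `𝕊²`, defined on the interval `[a, b]`,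
recorded together with its (continuous, nonvanishing) derivative. -/
structure C1Curve (a b : ℝ) where
  toFun : ℝ → E3
  deriv : ℝ → E3
  mem_sphere : ∀ t ∈ Set.Icc a b, ‖toFun t‖ = 1
  hasDeriv : ∀ t ∈ Set.Icc a b, HasDerivWithinAt toFun (deriv t) (Set.Icc a b) t
  deriv_cont : ContinuousOn deriv (Set.Icc a b)
  regular : ∀ t ∈ Set.Icc a b, deriv t ≠ 0

variable {a b : ℝ}

/-- The unit tangent vector `𝐭_γ(t) = γ̇(t)/|γ̇(t)|`. -/
def tangent (γ : C1Curve a b) (t : ℝ) : E3 := ‖γ.deriv t‖⁻¹ • γ.deriv t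

/-- The unit normal vector `𝐧_γ(t) = γ(t) × 𝐭_γ(t)`. -/
def normal (γ : C1Curve a b) (t : ℝ) : E3 := cross (γ.toFun t) (tangent γ t)

/-- The length `L_γ` of the curve. -/
def clength (γ : C1Curve a b) : ℝ := ∫ t in a..b, ‖γ.deriv t‖

/-- The arc length function `s(t) = ∫_a^t |γ̇|`. -/
def arcLen (γ : C1Curve a b) (t : ℝ) : ℝ := ∫ u in a..t, ‖γ.deriv u‖

/-- The curve is parametrized by arc length. -/
def UnitSpeed (γ : C1Curve a b) : Prop := ∀ t ∈ Set.Icc a b, ‖γ.deriv t‖ = 1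

/-- The curve is parametrized with constant speed `|γ̇| ≡ L_γ`. -/
def ConstantSpeed (γ : C1Curve a b) : Prop := ∀ t ∈ Set.Icc a b, ‖γ.deriv t‖ = clength γ

/-- The circle of center `c ∈ 𝕊²` and spherical radius `r ∈ (0,π)`, oriented anticlockwise
about `c`, passes through `γ(t₁)` with the same unit tangent vector as `γ` there.
(The unit tangent of the anticlockwise circle at a point `x` on it is `(sin r)⁻¹ (c × x)`.) -/
def IsTangentCircleAt (γ : C1Curve a b) (t₁ : ℝ) (c : E3) (r : ℝ) : Prop :=
  ‖c‖ = 1 ∧ r ∈ Set.Ioo 0 π ∧ sdist (γ.toFun t₁) c = r ∧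
    tangent γ t₁ = (Real.sin r)⁻¹ • cross c (γ.toFun t₁)

/-- The circle of center `c` and radius `r` is tangent from the left to `γ` at `γ(t₁)`. -/
def TangentFromLeft (γ : C1Curve a b) (t₁ : ℝ) (c : E3) (r : ℝ) : Prop :=
  IsTangentCircleAt γ t₁ c r ∧
    ∃ δ > 0, ∀ t ∈ Set.Ioo (t₁ - δ) (t₁ + δ) ∩ Set.Icc a b, r ≤ sdist (γ.toFun t) c

/-- The circle of center `c` and radius `r` is tangent from the right to `γ` at `γ(t₁)`. -/
def TangentFromRight (γ : C1Curve a b) (t₁ : ℝ) (c : E3) (r : ℝ) : Prop :=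
  IsTangentCircleAt γ t₁ c r ∧
    ∃ δ > 0, ∀ t ∈ Set.Ioo (t₁ - δ) (t₁ + δ) ∩ Set.Icc a b, sdist (γ.toFun t) c ≤ r

/-- The upper curvature `κ⁺_γ(t)`: the infimum of `cot r` over all circles tangent from the
left to `γ` at `γ(t)` (with `inf ∅ = +∞`), as an extended real number. -/
def upperCurv (γ : C1Curve a b) (t : ℝ) : EReal :=
  sInf {x : EReal | ∃ c r, TangentFromLeft γ t c r ∧ x = ((Real.cot r : ℝ) : EReal)}

/-- The lower curvature `κ⁻_γ(t)`: the supremum of `cot r` over all circles tangent from the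
right to `γ` at `γ(t)` (with `sup ∅ = -∞`), as an extended real number. -/
def lowerCurv (γ : C1Curve a b) (t : ℝ) : EReal :=
  sSup {x : EReal | ∃ c r, TangentFromRight γ t c r ∧ x = ((Real.cot r : ℝ) : EReal)}

/-- The matrix with columns `x`, `y`, `z`. -/
def colMatrix (x y z : E3) : Matrix (Fin 3) (Fin 3) ℝ :=
  Matrix.of fun i j => ![x, y, z] j i

/-- The Frenet frame `𝔉_γ(t)`, the matrix with columns `γ(t)`, `𝐭_γ(t)`, `𝐧_γ(t)`. -/
def frenet (γ : C1Curve a b) (t : ℝ) : Matrix (Fin 3) (Fin 3) ℝ :=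
  colMatrix (γ.toFun t) (tangent γ t) (normal γ t)

/-- `SO₃(ℝ)`. -/
abbrev SO3 := Matrix.specialOrthogonalGroup (Fin 3) ℝ

/-- Lebesgue measure restricted to `[0,1]`. -/
def μ01 : Measure ℝ := volume.restrict (Set.Icc (0:ℝ) 1)

/-- Membership in `𝓘(P,Q)`: the Frenet frame equals `P` at `t = 0` and `Q` at `t = 1`. -/
def MemI (P Q : Matrix (Fin 3) (Fin 3) ℝ) (γ : C1Curve 0 1) : Prop :=
  frenet γ 0 = P ∧ frenet γ 1 = Q

/-- `κ` is the a.e. geodesic curvature of `γ : [0,1] → 𝕊²`: almost everywhere the unit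
tangent vector is differentiable with `d𝐭/dt = |γ̇| (-γ + κ 𝐧)`
(i.e. `𝐭' = -γ + κ𝐧` with respect to arc length). -/
def IsCurvature (γ : C1Curve 0 1) (κ : ℝ → ℝ) : Prop :=
  Measurable κ ∧
    ∀ᵐ t ∂μ01, HasDerivWithinAt (tangent γ)
      (‖γ.deriv t‖ • (-(γ.toFun t) + κ t • normal γ t)) (Set.Icc 0 1) t

/-- Membership in `𝓟_{κ₁}^{κ₂}(P,Q)`: `γ ∈ 𝓘(P,Q)`, `γ̇` is Lipschitz continuous, and the
a.e. defined geodesic curvature `κ` satisfies `κ₁ < essinf κ ≤ esssup κ < κ₂`. -/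
def MemP (κ₁ κ₂ : ℝ) (P Q : Matrix (Fin 3) (Fin 3) ℝ) (γ : C1Curve 0 1) : Prop :=
  MemI P Q γ ∧ (∃ K : ℝ≥0, LipschitzOnWith K γ.deriv (Set.Icc 0 1)) ∧
  ∃ κ : ℝ → ℝ, IsCurvature γ κ ∧
    (κ₁ : EReal) < essInf (fun t => ((κ t : ℝ) : EReal)) μ01 ∧
    essInf (fun t => ((κ t : ℝ) : EReal)) μ01 ≤ essSup (fun t => ((κ t : ℝ) : EReal)) μ01 ∧
    essSup (fun t => ((κ t : ℝ) : EReal)) μ01 < (κ₂ : EReal)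

/-- Membership in `𝓢_{κ₁}^{κ₂}(P,Q)`: `γ ∈ 𝓘(P,Q)` and
`κ₁ < inf_{t ∈ [0,1]} κ⁻_γ(t) ≤ sup_{t ∈ [0,1]} κ⁺_γ(t) < κ₂`. -/
def MemS (κ₁ κ₂ : ℝ) (P Q : Matrix (Fin 3) (Fin 3) ℝ) (γ : C1Curve 0 1) : Prop :=
  MemI P Q γ ∧
    (κ₁ : EReal) < (⨅ t : Set.Icc (0:ℝ) 1, lowerCurv γ ↑t) ∧
    (⨅ t : Set.Icc (0:ℝ) 1, lowerCurv γ ↑t) ≤ (⨆ t : Set.Icc (0:ℝ) 1, upperCurv γ ↑t) ∧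
    (⨆ t : Set.Icc (0:ℝ) 1, upperCurv γ ↑t) < (κ₂ : EReal)

/-- Pointwise two-sided curvature bounds `κ₁ < κ⁻_γ(t) ≤ κ⁺_γ(t) < κ₂` on the whole domain,
i.e. membership in `𝓛_{κ₁}^{κ₂}` (apart from the endpoint conditions). -/
def CurvBetween (κ₁ κ₂ : ℝ) (γ : C1Curve a b) : Prop :=
  ∀ t ∈ Set.Icc a b,
    (κ₁ : EReal) < lowerCurv γ t ∧ lowerCurv γ t ≤ upperCurv γ t ∧
      upperCurv γ t < (κ₂ : EReal)

/-- The `C⁰` distance `d⁰(α,β) = max_t d(α(t), β(t))`. -/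
def d0 (α β : C1Curve 0 1) : ℝ := ⨆ t : Set.Icc (0:ℝ) 1, sdist (α.toFun ↑t) (β.toFun ↑t)

/-- The `C¹` distance `d̄¹(α,β) = max_t [d(α(t),β(t)) + |α̇(t) - β̇(t)|]`. -/
def d1bar (α β : C1Curve 0 1) : ℝ :=
  ⨆ t : Set.Icc (0:ℝ) 1, (sdist (α.toFun ↑t) (β.toFun ↑t) + ‖α.deriv ↑t - β.deriv ↑t‖)

/-- `h(t) = t - t⁻¹`, a diffeomorphism `(0,∞) → ℝ`. -/
def hfun (t : ℝ) : ℝ := t - t⁻¹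

/-- The inverse of `h : (0,∞) → ℝ`. -/
def hInv (y : ℝ) : ℝ := Function.invFunOn hfun (Set.Ioi 0) y

/-- `h_{κ₁,κ₂}(t) = (κ₁ - t)⁻¹ + (κ₂ - t)⁻¹`, a diffeomorphism `(κ₁,κ₂) → ℝ`. -/
def hk (κ₁ κ₂ t : ℝ) : ℝ := (κ₁ - t)⁻¹ + (κ₂ - t)⁻¹

/-- The inverse of `h_{κ₁,κ₂} : (κ₁,κ₂) → ℝ`. -/
def hkInv (κ₁ κ₂ y : ℝ) : ℝ := Function.invFunOn (hk κ₁ κ₂) (Set.Ioo κ₁ κ₂) y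

/-- `(v, w)` is a `(κ₁,κ₂)`-strongly admissible pair of coefficients: `v = h⁻¹(v̂)` and
`w = v ⬝ h_{κ₁,κ₂}⁻¹(ŵ)` for some pair `(v̂, ŵ) ∈ L^∞[0,1] × L^∞[0,1]`; equivalently `v, w`
are measurable with `v > 0`, `w/v ∈ (κ₁,κ₂)`, and `h ∘ v` and `h_{κ₁,κ₂} ∘ (w/v)` are
bounded on `[0,1]`. -/
def StronglyAdmissiblePair (κ₁ κ₂ : ℝ) (v w : ℝ → ℝ) : Prop :=
  Measurable v ∧ Measurable w ∧
  (∀ t, 0 < v t) ∧ (∀ t, w t / v t ∈ Set.Ioo κ₁ κ₂) ∧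
  (∃ C : ℝ, ∀ t ∈ Set.Icc (0:ℝ) 1, |hfun (v t)| ≤ C) ∧
  (∃ C : ℝ, ∀ t ∈ Set.Icc (0:ℝ) 1, |hk κ₁ κ₂ (w t / v t)| ≤ C)

/-- The columns `f₁, f₂, f₃` form a Lipschitz (`W^{1,∞}`) solution of the frame ODE
`Φ' = Φ Λ` on `[0,1]`, where `Λ` has entries `Λ₁₂ = -v`, `Λ₂₁ = v`, `Λ₂₃ = -w`, `Λ₃₂ = w`. -/
def FrameODE (v w : ℝ → ℝ) (f₁ f₂ f₃ : ℝ → E3) : Prop :=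
  (∃ K : ℝ≥0, LipschitzOnWith K f₁ (Set.Icc 0 1)) ∧
  (∃ K : ℝ≥0, LipschitzOnWith K f₂ (Set.Icc 0 1)) ∧
  (∃ K : ℝ≥0, LipschitzOnWith K f₃ (Set.Icc 0 1)) ∧
  (∀ᵐ t ∂μ01,
    HasDerivWithinAt f₁ (v t • f₂ t) (Set.Icc 0 1) t ∧
    HasDerivWithinAt f₂ (-(v t) • f₁ t + w t • f₃ t) (Set.Icc 0 1) t ∧
    HasDerivWithinAt f₃ (-(w t) • f₂ t) (Set.Icc 0 1) t)

/-- The `(κ₁,κ₂)`-strongly admissible parametrized curve `f = Φ e₁` corresponds to the pair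
`(v̂, ŵ) ∈ ℝ × L^∞[0,1]` (with `v̂` constant), with frame solving `Φ' = ΦΛ`, `Φ(0) = P`,
`Φ(1) = Q`. -/
def Corr16 (κ₁ κ₂ : ℝ) (P Q : Matrix (Fin 3) (Fin 3) ℝ)
    (p : ℝ × Lp ℝ ⊤ μ01) (f : ℝ → E3) : Prop :=
  ∃ f₂ f₃ : ℝ → E3,
    FrameODE (fun _ => hInv p.1) (fun t => hInv p.1 * hkInv κ₁ κ₂ (p.2 t)) f f₂ f₃ ∧
    colMatrix (f 0) (f₂ 0) (f₃ 0) = P ∧ colMatrix (f 1) (f₂ 1) (f₃ 1) = Q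

/-- The set `B = {(v̂, ŵ) ∈ ℝ × L^∞[0,1] : Φ_{(v̂,ŵ)}(1) = Q}` (with `Φ_{(v̂,ŵ)}(0) = P`). -/
def BSet (κ₁ κ₂ : ℝ) (P Q : Matrix (Fin 3) (Fin 3) ℝ) : Set (ℝ × Lp ℝ ⊤ μ01) :=
  {p | ∃ f : ℝ → E3, Corr16 κ₁ κ₂ P Q p f}

end Curves

/-!
At each point `x`, a circle tangent from the right with `cot r > κ₁` and a circle tangent from the
left with `cot r < κ₂` trap the curve, so near `x` its normal component obeys
`|⟪γ t, 𝐧(x)⟫| ≤ K (1 - ⟪γ t, γ x⟫) ≤ K (t - x)² / 2` with `K = max |κ₁| |κ₂|`: the curve leaves its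
tangent line only quadratically. Hence, for a unit vector `e` and `C` large, `t ↦ ⟪γ t, e⟫ - C t²`
lies strictly below its tangent line on one side of every point (the side is chosen by the sign of
`⟪𝐭(x), e⟫`). This forces it to be concave, so `⟪𝐭, e⟫ - 2 C t` is nonincreasing; taking `e` along
`𝐭(u) - 𝐭(s)` bounds `‖𝐭(u) - 𝐭(s)‖` by `2 C (u - s)`.
-/

namespace Curves

theorem chord_le_of_frequently_lt_tangent {F F' : ℝ → ℝ} {s u : ℝ} (hsu : s ≤ u)
    (hcont : ContinuousOn F (Icc s u)) (hderiv : ∀ x ∈ Ioo s u, HasDerivAt F (F' x) x)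
    (hbelow : ∀ x ∈ Ioo s u, ∃ᶠ t in 𝓝 x, F t < F x + F' x * (t - x)) :
    ∀ y ∈ Icc s u, F s + slope F s u * (y - s) ≤ F y := by
  set G : ℝ → ℝ := fun y => F y - (F s + slope F s u * (y - s))
  have hGs : G s = 0 := by simp [G]
  have hGu : G u = 0 := by
    have := sub_smul_slope F s u
    simp only [smul_eq_mul, vsub_eq_sub] at this
    simp only [G]
    linarith
  have hGc : ContinuousOn G (Icc s u) := hcont.sub (by fun_prop)
  obtain ⟨x₀, hx₀, hmin⟩ := isCompact_Icc.exists_isMinOn (nonempty_Icc.2 hsu) hGc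
  suffices 0 ≤ G x₀ from fun y hy => by linarith [show G x₀ ≤ G y from hmin hy]
  by_contra! hneg
  have hx₀' : x₀ ∈ Ioo s u :=
    ⟨hx₀.1.lt_of_ne (by rintro rfl; linarith), hx₀.2.lt_of_ne (by rintro rfl; linarith)⟩
  have hloc : IsLocalMin G x₀ := hmin.isLocalMin (Icc_mem_nhds hx₀'.1 hx₀'.2)
  have hG' : HasDerivAt G (F' x₀ - slope F s u) x₀ := by
    have := (hderiv x₀ hx₀').sub
      ((((hasDerivAt_id x₀).sub_const s).const_mul (slope F s u)).const_add (F s))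
    rwa [mul_one] at this
  have hslope : F' x₀ = slope F s u := sub_eq_zero.1 (hloc.hasDerivAt_eq_zero hG')
  obtain ⟨t, hlt, hge⟩ := ((hbelow x₀ hx₀').and_eventually hloc).exists
  simp only [G, hslope] at hlt hge
  linarith

theorem concaveOn_of_frequently_lt_tangent {F F' : ℝ → ℝ} {a b : ℝ}
    (hcont : ContinuousOn F (Icc a b)) (hderiv : ∀ x ∈ Ioo a b, HasDerivAt F (F' x) x)
    (hbelow : ∀ x ∈ Ioo a b, ∃ᶠ t in 𝓝 x, F t < F x + F' x * (t - x)) :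
    ConcaveOn ℝ (Icc a b) F := by
  refine concaveOn_of_slope_anti_adjacent (convex_Icc a b) fun {x y z} hx hz hxy hyz => ?_
  have hsub : Ioo x z ⊆ Ioo a b := Ioo_subset_Ioo hx.1 hz.2
  have hchord := chord_le_of_frequently_lt_tangent (hxy.trans hyz).le
    (hcont.mono (Icc_subset_Icc hx.1 hz.2)) (fun w hw => hderiv w (hsub hw))
    (fun w hw => hbelow w (hsub hw)) y ⟨hxy.le, hyz.le⟩
  have hslope := sub_smul_slope F x z
  simp only [smul_eq_mul, vsub_eq_sub] at hslope
  calc (F z - F y) / (z - y) ≤ slope F x z := by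
        rw [div_le_iff₀ (sub_pos.2 hyz)]; linarith
    _ ≤ (F y - F x) / (y - x) := by
        rw [le_div_iff₀ (sub_pos.2 hxy)]; linarith

theorem antitoneOn_of_frequently_lt_tangent {F F' : ℝ → ℝ} {a b : ℝ}
    (hderiv : ∀ x ∈ Icc a b, HasDerivWithinAt F (F' x) (Icc a b) x)
    (hbelow : ∀ x ∈ Ioo a b, ∃ᶠ t in 𝓝 x, F t < F x + F' x * (t - x)) :
    AntitoneOn F' (Icc a b) := by
  have hconc := concaveOn_of_frequently_lt_tangent (fun x hx => (hderiv x hx).continuousWithinAt)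
    (fun x hx => (hderiv x (Ioo_subset_Icc_self hx)).hasDerivAt (Icc_mem_nhds hx.1 hx.2)) hbelow
  intro s hs u hu hsu
  rcases hsu.eq_or_lt with rfl | hlt
  · rfl
  exact (hconc.le_slope_of_hasDerivWithinAt hs hu hlt (hderiv u hu)).trans
    (hconc.slope_le_of_hasDerivWithinAt hs hu hlt (hderiv s hs))

theorem antitoneOn_sub_mul_of_eventually_quadratic_approx
    {f m : ℝ → ℝ} {ξ : ℝ → ℝ → ℝ} {a b C : ℝ}
    (hf : ∀ x ∈ Icc a b, HasDerivWithinAt f (m x) (Icc a b) x)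
    (hξ : ∀ x ∈ Ioo a b, ∀ᶠ t in 𝓝 x, |ξ x t| ≤ |t - x|)
    (happrox : ∀ x ∈ Ioo a b, ∀ᶠ t in 𝓝 x, |f t - f x - ξ x t * m x| ≤ C * (t - x) ^ 2) :
    AntitoneOn (fun x => m x - 2 * (C + 1) * x) (Icc a b) := by
  refine antitoneOn_of_frequently_lt_tangent (F := fun t => f t - (C + 1) * t ^ 2)
    (fun x hx => ?_) (fun x hx => ?_)
  · exact ((hf x hx).sub ((hasDerivAt_pow 2 x).const_mul (C + 1)).hasDerivWithinAt).congr_deriv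
      (by norm_num; ring)
  have hbelow : ∀ᶠ t in 𝓝 x, t ≠ x → (ξ x t - (t - x)) * m x ≤ 0 →
      f t - (C + 1) * t ^ 2 < f x - (C + 1) * x ^ 2 + (m x - 2 * (C + 1) * x) * (t - x) := by
    filter_upwards [happrox x hx] with t ht hne hsign
    have hsq : 0 < (t - x) ^ 2 := by positivity [sub_ne_zero.2 hne]
    nlinarith [(abs_le.1 ht).2]
  -- `ξ x t` stands in for `t - x`; the error `(ξ x t - (t - x)) * m x` is `≤ 0` on the side of `x`
  -- selected by the sign of `m x`, and there `f t - (C + 1) * t ^ 2` lies below its tangent line.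
  rcases le_or_gt 0 (m x) with hm | hm
  · have hright : ∀ᶠ t in 𝓝[>] x, f t - (C + 1) * t ^ 2 <
        f x - (C + 1) * x ^ 2 + (m x - 2 * (C + 1) * x) * (t - x) := by
      filter_upwards [nhdsWithin_le_nhds (hbelow.and (hξ x hx)), self_mem_nhdsWithin]
        with t ⟨hb, hξt⟩ (htx : x < t)
      refine hb htx.ne' (mul_nonpos_of_nonpos_of_nonneg ?_ hm)
      rw [abs_of_pos (sub_pos.2 htx)] at hξt
      linarith [le_abs_self (ξ x t)]
    exact hright.frequently.filter_mono nhdsWithin_le_nhds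
  · have hleft : ∀ᶠ t in 𝓝[<] x, f t - (C + 1) * t ^ 2 <
        f x - (C + 1) * x ^ 2 + (m x - 2 * (C + 1) * x) * (t - x) := by
      filter_upwards [nhdsWithin_le_nhds (hbelow.and (hξ x hx)), self_mem_nhdsWithin]
        with t ⟨hb, hξt⟩ (htx : t < x)
      refine hb htx.ne (mul_nonpos_of_nonneg_of_nonpos ?_ hm.le)
      rw [abs_of_neg (sub_neg.2 htx)] at hξt
      linarith [neg_abs_le (ξ x t)]
    exact hleft.frequently.filter_mono nhdsWithin_le_nhds

theorem inner_eq_sum_three (x y : E3) : ⟪x, y⟫ = x 0 * y 0 + x 1 * y 1 + x 2 * y 2 := by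
  simp only [PiLp.inner_apply, RCLike.inner_apply, ringHom_apply, Fin.sum_univ_three]
  ring

theorem cross_apply_zero (x y : E3) : cross x y 0 = x 1 * y 2 - x 2 * y 1 := rfl
theorem cross_apply_one (x y : E3) : cross x y 1 = x 2 * y 0 - x 0 * y 2 := rfl
theorem cross_apply_two (x y : E3) : cross x y 2 = x 0 * y 1 - x 1 * y 0 := rfl

theorem ext_three {x y : E3} (h0 : x 0 = y 0) (h1 : x 1 = y 1) (h2 : x 2 = y 2) : x = y := by
  ext i
  fin_cases i <;> assumption

theorem cross_smul_right (c : ℝ) (x y : E3) : cross x (c • y) = c • cross x y := by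
  apply ext_three <;>
  · simp only [cross_apply_zero, cross_apply_one, cross_apply_two, PiLp.smul_apply, smul_eq_mul]
    ring

theorem cross_cross_self (x y : E3) : cross x (cross y x) = ⟪x, x⟫ • y - ⟪x, y⟫ • x := by
  apply ext_three <;>
  · simp only [cross_apply_zero, cross_apply_one, cross_apply_two, PiLp.sub_apply,
      PiLp.smul_apply, smul_eq_mul, inner_eq_sum_three]
    ring

theorem inner_cross_self (x y : E3) : ⟪cross x y, cross x y⟫ = ⟪x, x⟫ * ⟪y, y⟫ - ⟪x, y⟫ ^ 2 := by
  simp only [inner_eq_sum_three, cross_apply_zero, cross_apply_one, cross_apply_two]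
  ring

theorem norm_cross_of_orthonormal {x y : E3} (hx : ‖x‖ = 1) (hy : ‖y‖ = 1) (hxy : ⟪x, y⟫ = 0) :
    ‖cross x y‖ = 1 := by
  have h : ‖cross x y‖ ^ 2 = 1 := by
    rw [← real_inner_self_eq_norm_sq, inner_cross_self, real_inner_self_eq_norm_sq,
      real_inner_self_eq_norm_sq, hx, hy, hxy]
    norm_num
  exact (pow_eq_one_iff_of_nonneg (norm_nonneg _) two_ne_zero).1 h

theorem eq_inner_smul_add_of_orthonormal {x y : E3} (hx : ‖x‖ = 1) (hy : ‖y‖ = 1)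
    (hxy : ⟪x, y⟫ = 0) (v : E3) :
    v = ⟪v, x⟫ • x + ⟪v, y⟫ • y + ⟪v, cross x y⟫ • cross x y := by
  have key : ⟪cross x y, cross x y⟫ • v =
      ⟪v, x⟫ • (⟪y, y⟫ • x - ⟪x, y⟫ • y) + ⟪v, y⟫ • (⟪x, x⟫ • y - ⟪x, y⟫ • x)
        + ⟪v, cross x y⟫ • cross x y := by
    apply ext_three <;>
    · simp only [cross_apply_zero, cross_apply_one, cross_apply_two, PiLp.add_apply,
        PiLp.sub_apply, PiLp.smul_apply, smul_eq_mul, inner_eq_sum_three]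
      ring
  rw [inner_cross_self, real_inner_self_eq_norm_sq, real_inner_self_eq_norm_sq, hx, hy, hxy] at key
  simpa using key

theorem cos_sdist {x y : E3} (hx : ‖x‖ = 1) (hy : ‖y‖ = 1) : cos (sdist x y) = ⟪x, y⟫ := by
  have h := abs_le.1 ((abs_real_inner_le_norm x y).trans_eq (by rw [hx, hy, one_mul]))
  exact cos_arccos h.1 h.2

instance {a b : ℝ} : CoeFun (C1Curve a b) (fun _ => ℝ → E3) := ⟨C1Curve.toFun⟩

variable {a b : ℝ}

theorem eventually_nhdsWithin_of_forall_Ioo_inter {s : Set ℝ} {P : ℝ → Prop} {u δ : ℝ}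
    (hδ : 0 < δ) (h : ∀ t ∈ Ioo (u - δ) (u + δ) ∩ s, P t) : ∀ᶠ t in 𝓝[s] u, P t := by
  rw [eventually_nhdsWithin_iff]
  filter_upwards [Ioo_mem_nhds (by linarith : u - δ < u) (by linarith : u < u + δ)] with t ht hts
  exact h t ⟨ht, hts⟩

namespace C1Curve

variable (γ : C1Curve a b) {s t x : ℝ}

theorem inner_le_one (hs : s ∈ Icc a b) (ht : t ∈ Icc a b) : ⟪γ t, γ s⟫ ≤ 1 :=
  (real_inner_le_norm _ _).trans_eq (by rw [γ.mem_sphere t ht, γ.mem_sphere s hs, one_mul])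

theorem norm_tangent (ht : t ∈ Icc a b) : ‖tangent γ t‖ = 1 :=
  norm_smul_inv_norm (γ.regular t ht)

theorem inner_deriv_eq_zero (hx : x ∈ Ioo a b) : ⟪γ x, γ.deriv x⟫ = 0 := by
  have hd : HasDerivAt γ (γ.deriv x) x :=
    (γ.hasDeriv x (Ioo_subset_Icc_self hx)).hasDerivAt (Icc_mem_nhds hx.1 hx.2)
  have hconst : (fun t => ⟪γ t, γ t⟫) =ᶠ[𝓝 x] fun _ => 1 := by
    filter_upwards [Icc_mem_nhds hx.1 hx.2] with t ht
    rw [real_inner_self_eq_norm_sq, γ.mem_sphere t ht, one_pow]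
  have h := (hd.inner ℝ hd).unique ((hasDerivAt_const x (1 : ℝ)).congr_of_eventuallyEq hconst)
  rw [real_inner_comm (γ x) (γ.deriv x)] at h
  linarith

theorem inner_tangent_eq_zero (hx : x ∈ Ioo a b) : ⟪γ x, tangent γ x⟫ = 0 := by
  rw [tangent, real_inner_smul_right, γ.inner_deriv_eq_zero hx, mul_zero]

theorem norm_normal (hx : x ∈ Ioo a b) : ‖normal γ x‖ = 1 :=
  norm_cross_of_orthonormal (γ.mem_sphere x (Ioo_subset_Icc_self hx))
    (γ.norm_tangent (Ioo_subset_Icc_self hx)) (γ.inner_tangent_eq_zero hx)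

theorem eq_frame_expansion (hx : x ∈ Ioo a b) (v : E3) :
    v = ⟪v, γ x⟫ • γ x + ⟪v, tangent γ x⟫ • tangent γ x + ⟪v, normal γ x⟫ • normal γ x :=
  eq_inner_smul_add_of_orthonormal (γ.mem_sphere x (Ioo_subset_Icc_self hx))
    (γ.norm_tangent (Ioo_subset_Icc_self hx)) (γ.inner_tangent_eq_zero hx) v

end C1Curve

section TangentCircles

variable {γ : C1Curve a b} {u r : ℝ} {c : E3}

theorem IsTangentCircleAt.center_eq (h : IsTangentCircleAt γ u c r) (hu : u ∈ Icc a b) :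
    c = cos r • γ u + sin r • normal γ u := by
  obtain ⟨hc, hr, hdist, htan⟩ := h
  have hcos : ⟪γ u, c⟫ = cos r := by rw [← hdist, cos_sdist (γ.mem_sphere u hu) hc]
  have hγu : ⟪γ u, γ u⟫ = 1 := by
    rw [real_inner_self_eq_norm_sq, γ.mem_sphere u hu, one_pow]
  have hsin : sin r ≠ 0 := (sin_pos_of_pos_of_lt_pi hr.1 hr.2).ne'
  rw [normal, htan, cross_smul_right, cross_cross_self, hγu, hcos, one_smul, smul_smul,
    mul_inv_cancel₀ hsin, one_smul]
  abel

theorem TangentFromRight.eventually_cot_mul_le (h : TangentFromRight γ u c r) (hu : u ∈ Icc a b) :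
    ∀ᶠ t in 𝓝[Icc a b] u, cot r * (1 - ⟪γ t, γ u⟫) ≤ ⟪γ t, normal γ u⟫ := by
  obtain ⟨hcirc, δ, hδ, hinside⟩ := h
  have hr := hcirc.2.1
  filter_upwards [eventually_nhdsWithin_of_forall_Ioo_inter hδ hinside, self_mem_nhdsWithin]
    with t hdist ht
  have hcos : cos r ≤ ⟪γ t, c⟫ := by
    rw [← cos_sdist (γ.mem_sphere t ht) hcirc.1]
    exact cos_le_cos_of_nonneg_of_le_pi (arccos_nonneg _) hr.2.le hdist
  rw [hcirc.center_eq hu, inner_add_right, real_inner_smul_right, real_inner_smul_right] at hcos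
  rw [cot_eq_cos_div_sin, div_mul_eq_mul_div, div_le_iff₀ (sin_pos_of_pos_of_lt_pi hr.1 hr.2)]
  linarith

theorem TangentFromLeft.eventually_le_cot_mul (h : TangentFromLeft γ u c r) (hu : u ∈ Icc a b) :
    ∀ᶠ t in 𝓝[Icc a b] u, ⟪γ t, normal γ u⟫ ≤ cot r * (1 - ⟪γ t, γ u⟫) := by
  obtain ⟨hcirc, δ, hδ, houtside⟩ := h
  have hr := hcirc.2.1
  filter_upwards [eventually_nhdsWithin_of_forall_Ioo_inter hδ houtside, self_mem_nhdsWithin]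
    with t hdist ht
  have hcos : ⟪γ t, c⟫ ≤ cos r := by
    rw [← cos_sdist (γ.mem_sphere t ht) hcirc.1]
    exact cos_le_cos_of_nonneg_of_le_pi hr.1.le (arccos_le_pi _) hdist
  rw [hcirc.center_eq hu, inner_add_right, real_inner_smul_right, real_inner_smul_right] at hcos
  rw [cot_eq_cos_div_sin, div_mul_eq_mul_div, le_div_iff₀ (sin_pos_of_pos_of_lt_pi hr.1 hr.2)]
  linarith

theorem eventually_mul_le_inner_normal_of_lt_lowerCurv {κ : ℝ} (hu : u ∈ Icc a b)
    (h : (κ : EReal) < lowerCurv γ u) :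
    ∀ᶠ t in 𝓝[Icc a b] u, κ * (1 - ⟪γ t, γ u⟫) ≤ ⟪γ t, normal γ u⟫ := by
  obtain ⟨_, ⟨c, r, hcirc, rfl⟩, hκr⟩ := lt_sSup_iff.1 h
  filter_upwards [hcirc.eventually_cot_mul_le hu, self_mem_nhdsWithin] with t hcot ht
  nlinarith [EReal.coe_lt_coe_iff.1 hκr, γ.inner_le_one hu ht]

theorem eventually_inner_normal_le_mul_of_upperCurv_lt {κ : ℝ} (hu : u ∈ Icc a b)
    (h : upperCurv γ u < (κ : EReal)) :
    ∀ᶠ t in 𝓝[Icc a b] u, ⟪γ t, normal γ u⟫ ≤ κ * (1 - ⟪γ t, γ u⟫) := by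
  obtain ⟨_, ⟨c, r, hcirc, rfl⟩, hrκ⟩ := sInf_lt_iff.1 h
  filter_upwards [hcirc.eventually_le_cot_mul hu, self_mem_nhdsWithin] with t hcot ht
  nlinarith [EReal.coe_lt_coe_iff.1 hrκ, γ.inner_le_one hu ht]

theorem eventually_abs_inner_normal_le {κ₁ κ₂ : ℝ} (hu : u ∈ Icc a b)
    (h₁ : (κ₁ : EReal) < lowerCurv γ u) (h₂ : upperCurv γ u < (κ₂ : EReal)) :
    ∀ᶠ t in 𝓝[Icc a b] u, |⟪γ t, normal γ u⟫| ≤ max |κ₁| |κ₂| * (1 - ⟪γ t, γ u⟫) := by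
  filter_upwards [eventually_mul_le_inner_normal_of_lt_lowerCurv hu h₁,
    eventually_inner_normal_le_mul_of_upperCurv_lt hu h₂, self_mem_nhdsWithin] with t hlow hupp ht
  have hz := sub_nonneg.2 (γ.inner_le_one hu ht)
  rw [abs_le]
  constructor
  · nlinarith [neg_abs_le κ₁, le_max_left |κ₁| |κ₂|]
  · nlinarith [le_abs_self κ₂, le_max_right |κ₁| |κ₂|]

end TangentCircles

namespace UnitSpeed

variable {γ : C1Curve a b} {s t u x : ℝ}

theorem tangent_eq (hγ : UnitSpeed γ) (ht : t ∈ Icc a b) : tangent γ t = γ.deriv t := by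
  rw [tangent, hγ t ht, inv_one, one_smul]

theorem hasDerivWithinAt_tangent (hγ : UnitSpeed γ) (ht : t ∈ Icc a b) :
    HasDerivWithinAt γ (tangent γ t) (Icc a b) t :=
  hγ.tangent_eq ht ▸ γ.hasDeriv t ht

theorem norm_sub_le (hγ : UnitSpeed γ) (hs : s ∈ Icc a b) (ht : t ∈ Icc a b) :
    ‖γ t - γ s‖ ≤ |t - s| := by
  simpa using (convex_Icc a b).norm_image_sub_le_of_norm_hasDerivWithin_le
    (fun x hx => γ.hasDeriv x hx) (fun x hx => (hγ x hx).le) hs ht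

theorem one_sub_inner_le (hγ : UnitSpeed γ) (hs : s ∈ Icc a b) (ht : t ∈ Icc a b) :
    1 - ⟪γ t, γ s⟫ ≤ (t - s) ^ 2 / 2 := by
  have h := norm_sub_sq_real (γ t) (γ s)
  rw [γ.mem_sphere t ht, γ.mem_sphere s hs] at h
  have := pow_le_pow_left₀ (norm_nonneg _) (hγ.norm_sub_le hs ht) 2
  rw [sq_abs] at this
  linarith

theorem abs_inner_tangent_le (hγ : UnitSpeed γ) (hx : x ∈ Ioo a b) (ht : t ∈ Icc a b) :
    |⟪γ t, tangent γ x⟫| ≤ |t - x| := by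
  have hx' := Ioo_subset_Icc_self hx
  rw [← sub_zero ⟪γ t, _⟫, ← γ.inner_tangent_eq_zero hx, ← inner_sub_left]
  calc |⟪γ t - γ x, tangent γ x⟫| ≤ ‖γ t - γ x‖ * ‖tangent γ x‖ := abs_real_inner_le_norm _ _
    _ ≤ |t - x| := by rw [γ.norm_tangent hx', mul_one]; exact hγ.norm_sub_le hx' ht

theorem eventually_norm_sub_sub_inner_tangent_smul_le (hγ : UnitSpeed γ) {K : ℝ} (hK0 : 0 ≤ K)
    (hx : x ∈ Ioo a b)
    (hK : ∀ᶠ t in 𝓝 x, |⟪γ t, normal γ x⟫| ≤ K * (1 - ⟪γ t, γ x⟫)) :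
    ∀ᶠ t in 𝓝 x, ‖γ t - γ x - ⟪γ t, tangent γ x⟫ • tangent γ x‖ ≤ (1 + K) / 2 * (t - x) ^ 2 := by
  have hx' := Ioo_subset_Icc_self hx
  filter_upwards [hK, Icc_mem_nhds hx.1 hx.2] with t hψ ht
  have hz := sub_nonneg.2 (γ.inner_le_one hx' ht)
  have hdecomp : γ t - γ x - ⟪γ t, tangent γ x⟫ • tangent γ x =
      (⟪γ t, γ x⟫ - 1) • γ x + ⟪γ t, normal γ x⟫ • normal γ x := by
    nth_rw 1 [γ.eq_frame_expansion hx (γ t)]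
    module
  rw [hdecomp]
  calc _ ≤ ‖(⟪γ t, γ x⟫ - 1) • γ x‖ + ‖⟪γ t, normal γ x⟫ • normal γ x‖ := norm_add_le _ _
    _ = (1 - ⟪γ t, γ x⟫) + |⟪γ t, normal γ x⟫| := by
      rw [norm_smul, norm_smul, γ.mem_sphere x hx', γ.norm_normal hx, Real.norm_eq_abs,
        Real.norm_eq_abs, abs_of_nonpos (by linarith), mul_one, mul_one, neg_sub]
    _ ≤ (1 + K) * (1 - ⟪γ t, γ x⟫) := by linarith
    _ ≤ (1 + K) * ((t - x) ^ 2 / 2) :=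
      mul_le_mul_of_nonneg_left (hγ.one_sub_inner_le hx' ht) (by linarith)
    _ = (1 + K) / 2 * (t - x) ^ 2 := by ring

theorem norm_tangent_sub_le_of_le (hγ : UnitSpeed γ) {K : ℝ} (hK0 : 0 ≤ K)
    (hK : ∀ x ∈ Ioo a b, ∀ᶠ t in 𝓝 x, |⟪γ t, normal γ x⟫| ≤ K * (1 - ⟪γ t, γ x⟫))
    (hs : s ∈ Icc a b) (hu : u ∈ Icc a b) (hsu : s ≤ u) :
    ‖tangent γ u - tangent γ s‖ ≤ (K + 3) * (u - s) := by
  set d := tangent γ u - tangent γ s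
  rcases eq_or_ne d 0 with hd | hd
  · rw [hd, norm_zero]
    exact mul_nonneg (by linarith) (sub_nonneg.2 hsu)
  set e : E3 := ‖d‖⁻¹ • d
  have he : ‖e‖ = 1 := norm_smul_inv_norm hd
  have hanti := antitoneOn_sub_mul_of_eventually_quadratic_approx (f := fun t => ⟪γ t, e⟫)
    (m := fun t => ⟪tangent γ t, e⟫) (ξ := fun x t => ⟪γ t, tangent γ x⟫) (C := (1 + K) / 2)
    (fun x hx => by
      simpa using (hγ.hasDerivWithinAt_tangent hx).inner ℝ (hasDerivWithinAt_const x _ e))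
    (fun x hx => by
      filter_upwards [Icc_mem_nhds hx.1 hx.2] with t ht using hγ.abs_inner_tangent_le hx ht)
    (fun x hx => by
      filter_upwards [hγ.eventually_norm_sub_sub_inner_tangent_smul_le hK0 hx (hK x hx)]
        with t ht
      rw [← inner_sub_left, ← real_inner_smul_left, ← inner_sub_left]
      exact (abs_real_inner_le_norm _ _).trans (by rwa [he, mul_one]))
    hs hu hsu
  have hde : ⟪d, e⟫ = ‖d‖ := by
    rw [real_inner_smul_right, real_inner_self_eq_norm_sq]
    field_simp
  simp only at hanti
  rw [← hde, inner_sub_left]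
  linarith

theorem norm_tangent_sub_le (hγ : UnitSpeed γ) {K : ℝ} (hK0 : 0 ≤ K)
    (hK : ∀ x ∈ Ioo a b, ∀ᶠ t in 𝓝 x, |⟪γ t, normal γ x⟫| ≤ K * (1 - ⟪γ t, γ x⟫))
    (hs : s ∈ Icc a b) (hu : u ∈ Icc a b) :
    ‖tangent γ u - tangent γ s‖ ≤ (K + 3) * |u - s| := by
  rcases le_total s u with hsu | hus
  · rw [abs_of_nonneg (sub_nonneg.2 hsu)]
    exact hγ.norm_tangent_sub_le_of_le hK0 hK hs hu hsu
  · rw [norm_sub_rev, abs_sub_comm, abs_of_nonneg (sub_nonneg.2 hus)]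
    exact hγ.norm_tangent_sub_le_of_le hK0 hK hu hs hus

end UnitSpeed

theorem stmt_8_general (κ₁ κ₂ : ℝ) :
    ∃ M : ℝ, 0 < M ∧ ∀ (L : ℝ) (γ : C1Curve 0 L), UnitSpeed γ →
      ((κ₁ : EReal) < (⨅ s : Set.Icc (0:ℝ) L, lowerCurv γ ↑s) ∧
        (⨅ s : Set.Icc (0:ℝ) L, lowerCurv γ ↑s) ≤ (⨆ s : Set.Icc (0:ℝ) L, upperCurv γ ↑s) ∧
        (⨆ s : Set.Icc (0:ℝ) L, upperCurv γ ↑s) < (κ₂ : EReal)) →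
      ∀ s₁ ∈ Set.Icc (0:ℝ) L, ∀ s₂ ∈ Set.Icc (0:ℝ) L,
        ‖tangent γ s₂ - tangent γ s₁‖ ≤ M * |s₂ - s₁| := by
  refine ⟨max |κ₁| |κ₂| + 3, by positivity, fun L γ hγ hcurv s₁ hs₁ s₂ hs₂ => ?_⟩
  refine hγ.norm_tangent_sub_le (by positivity) (fun x hx => ?_) hs₁ hs₂
  have hx' := Ioo_subset_Icc_self hx
  rw [← nhdsWithin_eq_nhds.2 (Icc_mem_nhds hx.1 hx.2)]
  exact eventually_abs_inner_normal_le hx'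
    (hcurv.1.trans_le (iInf_le (fun s : Icc (0:ℝ) L => lowerCurv γ s) ⟨x, hx'⟩))
    ((le_iSup (fun s : Icc (0:ℝ) L => upperCurv γ s) ⟨x, hx'⟩).trans_lt hcurv.2.2)

/-- there is a constant `M > 0`, depending only on `κ₁ < κ₂`, such that every
`C¹` regular curve parametrized by arc length on `[0, L_γ]` with
`κ₁ < inf_s κ⁻_γ(s) ≤ sup_s κ⁺_γ(s) < κ₂` has `M`-Lipschitz unit tangent vector:
`‖𝐭_γ(s₂) - 𝐭_γ(s₁)‖ ≤ M |s₂ - s₁|`. -/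
theorem stmt_8 (κ₁ κ₂ : ℝ) (h12 : κ₁ < κ₂) :
    ∃ M : ℝ, 0 < M ∧ ∀ (L : ℝ) (γ : C1Curve 0 L), UnitSpeed γ →
      ((κ₁ : EReal) < (⨅ s : Set.Icc (0:ℝ) L, lowerCurv γ ↑s) ∧
        (⨅ s : Set.Icc (0:ℝ) L, lowerCurv γ ↑s) ≤ (⨆ s : Set.Icc (0:ℝ) L, upperCurv γ ↑s) ∧
        (⨆ s : Set.Icc (0:ℝ) L, upperCurv γ ↑s) < (κ₂ : EReal)) →
      ∀ s₁ ∈ Set.Icc (0:ℝ) L, ∀ s₂ ∈ Set.Icc (0:ℝ) L,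
        ‖tangent γ s₂ - tangent γ s₁‖ ≤ M * |s₂ - s₁| :=
  stmt_8_general κ₁ κ₂

end Curves
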